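/- Let d ≥ 1 and k ≥ 0 be integers, let n_1,…,n_d ≥ 1, and let ω : V(K[n_1,…,n_d]) → [0,∞) be any weighting function with total weight W(ω) > 0. Then the limit superior as n → ∞ of β_k(T^(d)[n])/n^d is at most M_k(K[n_1,…,n_d],ω)/W(ω). -/

import Mathlib

open Filter Topology

/-- The `d`-dimensional kings graph on `Fin (n 0) × ⋯ × Fin (n (d-1))`:
distinct vertices are adjacent iff their coordinates differ by at most 1. -/
def kingsGraph (d : ℕ) (n : Fin d → ℕ) :
    SimpleGraph (∀ i : Fin d, Fin (n i)) where
  Adj u v := u ≠ v ∧ ∀ i, |((v i : ℤ)) - (u i : ℤ)| ≤ 1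
  symm := by
    constructor; rintro u v ⟨h1, h2⟩
    exact ⟨h1.symm, fun i => by rw [abs_sub_comm]; exact h2 i⟩
  loopless := by constructor; intro v h; exact h.1 rfl

/-- The `d`-dimensional toroidal kings graph on `ZMod (n 0) × ⋯ × ZMod (n (d-1))`:
distinct vertices are adjacent iff each coordinate difference is `-1`, `0` or `1`. -/
def torusGraph (d : ℕ) (n : Fin d → ℕ) :
    SimpleGraph (∀ i : Fin d, ZMod (n i)) where
  Adj u v := u ≠ v ∧ ∀ i, v i - u i = -1 ∨ v i - u i = 0 ∨ v i - u i = 1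
  symm := by
    constructor; rintro u v ⟨h1, h2⟩
    refine ⟨h1.symm, fun i => ?_⟩
    rcases h2 i with h | h | h
    · right; right; rw [show u i - v i = -(v i - u i) by ring, h]; norm_num
    · right; left; rw [show u i - v i = -(v i - u i) by ring, h]; norm_num
    · left; rw [show u i - v i = -(v i - u i) by ring, h]
  loopless := by constructor; intro v h; exact h.1 rfl

/-- A set `S` of vertices is `k`-dependent if every vertex of `S`
has at most `k` neighbors in `S`. -/
def IsKDependent {V : Type*} (G : SimpleGraph V) (k : ℕ) (S : Set V) : Prop :=
  ∀ v ∈ S, (S ∩ G.neighborSet v).ncard ≤ k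

/-- `betaK G k` is the maximum cardinality of a `k`-dependent set in `G`. -/
noncomputable def betaK {V : Type*} (G : SimpleGraph V) (k : ℕ) : ℕ :=
  sSup {m | ∃ S : Set V, IsKDependent G k S ∧ S.ncard = m}

/-- A set `S` of vertices is half-dependent if every vertex `v ∈ S`
has at most `|N(v)|/2` neighbors in `S`. -/
def IsHalfDependent {V : Type*} (G : SimpleGraph V) (S : Set V) : Prop :=
  ∀ v ∈ S, 2 * (S ∩ G.neighborSet v).ncard ≤ (G.neighborSet v).ncard

/-- `halfNum G` is the maximum cardinality of a half-dependent set in `G`. -/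
noncomputable def halfNum {V : Type*} (G : SimpleGraph V) : ℕ :=
  sSup {m | ∃ S : Set V, IsHalfDependent G S ∧ S.ncard = m}

/-- A graph is vertex-transitive if any vertex can be mapped to any other
by a graph automorphism. -/
def IsVertexTransitive {V : Type*} (G : SimpleGraph V) : Prop :=
  ∀ u v : V, ∃ f : G ≃g G, f u = v

/-! Averaging over the `n^d` translates of the box `Fin m₁ × ⋯ × Fin m_d` inside the torus
`(ZMod n)^d` (which embeds as soon as every `mᵢ ≤ n`): a maximum `k`-dependent set `S` of the
torus meets each translate in a `k`-dependent set of the kings graph, of weight at most `M`, while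
every box vertex lies in exactly `|S|` of the translated copies of `S`. Hence
`β_k(T[n]) · W ≤ n^d · M` for all large `n`. -/

open Finset

theorem IsKDependent.comap {V W : Type*} [Finite W] {G : SimpleGraph V} {H : SimpleGraph W}
    {k : ℕ} {S : Set W} (hS : IsKDependent H k S) (f : G →g H) (hf : Function.Injective f) :
    IsKDependent G k (f ⁻¹' S) := by
  intro v hv
  exact (Set.ncard_le_ncard_of_injOn (s := f ⁻¹' S ∩ G.neighborSet v)
    (t := S ∩ H.neighborSet (f v)) f
    (fun _ hu => ⟨hu.1, f.map_adj hu.2⟩) hf.injOn).trans (hS _ hv)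

theorem exists_isKDependent_ncard_eq_betaK {V : Type*} [Finite V] (G : SimpleGraph V) (k : ℕ) :
    ∃ S : Set V, IsKDependent G k S ∧ S.ncard = betaK G k :=
  Nat.sSup_mem (s := {m | ∃ S : Set V, IsKDependent G k S ∧ S.ncard = m})
    ⟨0, ∅, fun _ hv => hv.elim, Set.ncard_empty _⟩
    ⟨Nat.card V, by rintro _ ⟨S, -, rfl⟩; exact Set.ncard_le_card S⟩

theorem sum_sum_filter_add_mem_eq_card_nsmul {G X A : Type*} [AddGroup G] [Fintype G]
    [DecidableEq G] [Fintype X] [AddCommMonoid A] (ι : X → G) (ω : X → A) (S : Finset G) :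
    ∑ t : G, ∑ x with t + ι x ∈ S, ω x = #S • ∑ x, ω x := by
  simp_rw [sum_filter]
  rw [sum_comm, smul_sum]
  refine sum_congr rfl fun x _ => ?_
  rw [Fintype.sum_equiv (Equiv.addRight (ι x)) (fun t => if t + ι x ∈ S then ω x else 0)
    (fun s => if s ∈ S then ω x else 0) fun _ => rfl, sum_ite_mem, univ_inter, sum_const]

section Window

variable {d : ℕ} {m N : Fin d → ℕ}

theorem natCast_pi_injective_of_le (hmN : ∀ i, m i ≤ N i) :
    Function.Injective fun (x : ∀ i, Fin (m i)) (i : Fin d) => ((x i : ℕ) : ZMod (N i)) := by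
  intro x y h
  funext i
  have hxy := (ZMod.natCast_eq_natCast_iff' _ _ (N i)).mp (congrFun h i)
  rwa [Nat.mod_eq_of_lt ((x i).2.trans_le (hmN i)), Nat.mod_eq_of_lt ((y i).2.trans_le (hmN i)),
    Fin.val_inj] at hxy

def windowHom (hmN : ∀ i, m i ≤ N i) (t : ∀ i, ZMod (N i)) :
    kingsGraph d m →g torusGraph d N where
  toFun x := t + fun i => ((x i : ℕ) : ZMod (N i))
  map_rel' {x y} := by
    rintro ⟨hne, hclose⟩
    refine ⟨fun h => hne (natCast_pi_injective_of_le hmN (add_left_cancel h)), fun i => ?_⟩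
    have hstep : (y i : ℤ) - x i = -1 ∨ (y i : ℤ) - x i = 0 ∨ (y i : ℤ) - x i = 1 := by
      have := abs_le.mp (hclose i)
      omega
    have hcast :
        ((y i : ℕ) : ZMod (N i)) - (x i : ℕ) = (((y i : ℤ) - x i : ℤ) : ZMod (N i)) := by
      push_cast
      rfl
    simp only [Pi.add_apply, add_sub_add_left_eq_sub, hcast]
    rcases hstep with h | h | h <;> simp [h]

theorem windowHom_injective (hmN : ∀ i, m i ≤ N i) (t : ∀ i, ZMod (N i)) :
    Function.Injective (windowHom hmN t) :=
  (add_right_injective t).comp (natCast_pi_injective_of_le hmN)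

theorem betaK_torusGraph_mul_sum_le [∀ i, NeZero (N i)] (hmN : ∀ i, m i ≤ N i) {k : ℕ}
    (ω : (∀ i, Fin (m i)) → ℝ) {M : ℝ}
    (hM : ∀ T : Finset (∀ i, Fin (m i)),
      IsKDependent (kingsGraph d m) k ↑T → ∑ v ∈ T, ω v ≤ M) :
    (betaK (torusGraph d N) k : ℝ) * ∑ v, ω v ≤ (∏ i, (N i : ℝ)) * M := by
  classical
  obtain ⟨S, hS, hcard⟩ := exists_isKDependent_ncard_eq_betaK (torusGraph d N) k
  rw [← hcard, Set.ncard_eq_toFinset_card', ← nsmul_eq_mul,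
    ← sum_sum_filter_add_mem_eq_card_nsmul (fun x i => ((x i : ℕ) : ZMod (N i))) ω]
  calc ∑ t, ∑ x with t + (fun i => ((x i : ℕ) : ZMod (N i))) ∈ S.toFinset, ω x
      ≤ ∑ _t : ∀ i, ZMod (N i), M := by
        refine sum_le_sum fun t _ => hM _ ?_
        convert hS.comap (windowHom hmN t) (windowHom_injective hmN t)
        ext x
        simp [windowHom]
    _ = (∏ i, (N i : ℝ)) * M := by simp [Fintype.card_pi]

end Window

theorem stmt_15_general (d : ℕ) (k : ℕ)
    (m : Fin d → ℕ)
    (ω : (∀ i : Fin d, Fin (m i)) → ℝ)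
    (W : ℝ) (hW : W = ∑ v, ω v) (hWpos : 0 < W)
    (M : ℝ)
    (hM : M = sSup {x : ℝ |
        ∃ S : Finset (∀ i : Fin d, Fin (m i)),
          IsKDependent (kingsGraph d m) k ↑S ∧ ∑ v ∈ S, ω v = x}) :
    Filter.limsup
      (fun n : ℕ => (betaK (torusGraph d (fun _ => n)) k : ℝ) / (n : ℝ) ^ d)
      Filter.atTop ≤ M / W := by
  have hM_bound : ∀ T : Finset (∀ i, Fin (m i)), IsKDependent (kingsGraph d m) k ↑T →
      ∑ v ∈ T, ω v ≤ M := fun T hT =>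
    hM ▸ le_csSup ((Set.finite_range fun S : Finset _ => ∑ v ∈ S, ω v).subset
      (by rintro _ ⟨S, -, rfl⟩; exact ⟨S, rfl⟩)).bddAbove ⟨T, hT, rfl⟩
  refine Filter.limsup_le_of_le (Filter.isCoboundedUnder_le_of_le _ (x := 0) fun n => by
    positivity) ?_
  filter_upwards [Filter.eventually_ge_atTop (univ.sup m + 1)] with n hn
  have : NeZero n := ⟨by omega⟩
  have hn0 : 0 < n := by omega
  have hmn : ∀ i, m i ≤ n := fun i => (le_sup (mem_univ i)).trans (by omega)
  rw [div_le_div_iff₀ (by positivity) hWpos, hW, mul_comm M]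
  simpa using betaK_torusGraph_mul_sum_le hmn ω hM_bound

/-- limsup of β_k(T^(d)[n])/n^d is at most M_k(K[n_1,…,n_d],ω)/W(ω). -/
theorem stmt_15 (d : ℕ) (hd : 1 ≤ d) (k : ℕ)
    (m : Fin d → ℕ) (hm : ∀ i, 1 ≤ m i)
    (ω : (∀ i : Fin d, Fin (m i)) → ℝ) (hω : ∀ v, 0 ≤ ω v)
    (W : ℝ) (hW : W = ∑ v, ω v) (hWpos : 0 < W)
    (M : ℝ)
    (hM : M = sSup {x : ℝ |
        ∃ S : Finset (∀ i : Fin d, Fin (m i)),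
          IsKDependent (kingsGraph d m) k ↑S ∧ ∑ v ∈ S, ω v = x}) :
    Filter.limsup
      (fun n : ℕ => (betaK (torusGraph d (fun _ => n)) k : ℝ) / (n : ℝ) ^ d)
      Filter.atTop ≤ M / W :=
  stmt_15_general d k m ω W hW hWpos M hM
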